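/- Let M be an n×n real symmetric matrix with induced signed graph Γ = (G,σ), and let λ_k be the k-th eigenvalue of M (eigenvalues listed in nondecreasing order with multiplicity) with multiplicity r. Then for any eigenvector f_k with Mf_k = λ_k f_k, the number of strong nodal domains satisfies 𝔖(f_k) ≤ k + r − 1. -/

import Mathlib

/-! Let `Mf = λ f` and let `g = ∑_D c_D f|_D` range over the combinations of the restrictions
of `f` to its strong nodal domains, a space of dimension 𝔖(f). With `a x y = f x M_xy f y`
one has `λ gᵀg - gᵀMg = ½ ∑_{x,y} (c_x - c_y)² a x y`, and `a x y < 0` makes `x ~ y` an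
S-walk step, so `c_x = c_y`: hence `gᵀMg ≤ λ gᵀg` on that space. A nonzero vector
orthogonal to all eigenvectors with eigenvalue `≤ λ` has Rayleigh quotient `> λ`, so the
space meets their span trivially and 𝔖(f) ≤ #{i | λ_i ≤ λ_k} ≤ k + r - 1. -/

open Matrix Polynomial

section NodalDefs

variable {V : Type*}

/-- The product of the signature over consecutive pairs of a list of vertices. -/
noncomputable def chainSign (σ : V → V → ℝ) (l : List V) : ℝ :=
  ((l.zip l.tail).map fun p => σ p.1 p.2).prod

/-- One step of a strong nodal domain walk. -/
def SWalkStep (G : SimpleGraph V) (σ : V → V → ℝ) (f : V → ℝ) (u v : V) : Prop :=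
  G.Adj u v ∧ 0 < f u * σ u v * f v

/-- `x` and `y` are connected by a strong nodal domain walk (S-walk). -/
def SConn (G : SimpleGraph V) (σ : V → V → ℝ) (f : V → ℝ) (x y : V) : Prop :=
  ∃ l : List V, 2 ≤ l.length ∧ l.Chain' (SWalkStep G σ f) ∧
    l.head? = some x ∧ l.getLast? = some y

/-- The strong nodal domain (as a vertex set) containing the non-zero `w`. -/
def strongClass (G : SimpleGraph V) (σ : V → V → ℝ) (f : V → ℝ) (w : V) : Set V :=
  {x | f x ≠ 0 ∧ (x = w ∨ SConn G σ f x w)}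

/-- The set of strong nodal domains (as vertex sets) of `f`. -/
def strongDomains (G : SimpleGraph V) (σ : V → V → ℝ) (f : V → ℝ) : Set (Set V) :=
  {D | ∃ w, f w ≠ 0 ∧ D = strongClass G σ f w}

/-- 𝔖(f): the number of strong nodal domains of `f`. -/
noncomputable def numStrong (G : SimpleGraph V) (σ : V → V → ℝ) (f : V → ℝ) : ℕ :=
  Nat.card (strongDomains G σ f)

/-- A list of vertices is a weak nodal domain walk (W-walk). -/
def IsWWalk (G : SimpleGraph V) (σ : V → V → ℝ) (f : V → ℝ) (l : List V) : Prop :=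
  2 ≤ l.length ∧ l.Chain' G.Adj ∧
    ∀ i j : Fin l.length, i < j → f (l.get i) ≠ 0 → f (l.get j) ≠ 0 →
      (∀ k : Fin l.length, i < k → k < j → f (l.get k) = 0) →
      0 < f (l.get i) * chainSign σ ((l.drop i.val).take (j.val - i.val + 1)) * f (l.get j)

/-- `x` and `y` are connected by a weak nodal domain walk (W-walk). -/
def WConn (G : SimpleGraph V) (σ : V → V → ℝ) (f : V → ℝ) (x y : V) : Prop :=
  ∃ l : List V, IsWWalk G σ f l ∧ l.head? = some x ∧ l.getLast? = some y

/-- The weak nodal domain (as a vertex set) associated with the class of the non-zero `w`: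
the class `W` of `w` together with all vertices having a W-walk to some vertex of `W`. -/
def weakClass (G : SimpleGraph V) (σ : V → V → ℝ) (f : V → ℝ) (w : V) : Set V :=
  {x | (f x ≠ 0 ∧ (x = w ∨ WConn G σ f x w)) ∨
       ∃ u, f u ≠ 0 ∧ (u = w ∨ WConn G σ f u w) ∧ WConn G σ f x u}

/-- The set of weak nodal domains (as vertex sets) of `f`. -/
def weakDomains (G : SimpleGraph V) (σ : V → V → ℝ) (f : V → ℝ) : Set (Set V) :=
  {D | ∃ w, f w ≠ 0 ∧ D = weakClass G σ f w}

/-- 𝔚(f): the number of weak nodal domains of `f`. -/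
noncomputable def numWeak (G : SimpleGraph V) (σ : V → V → ℝ) (f : V → ℝ) : ℕ :=
  Nat.card (weakDomains G σ f)

/-- `σ` is a valid signature on `G`: symmetric and ±1-valued on edges. -/
def IsSignature (G : SimpleGraph V) (σ : V → V → ℝ) : Prop :=
  (∀ x y, σ x y = σ y x) ∧ ∀ x y, G.Adj x y → σ x y = 1 ∨ σ x y = -1

/-- `M` is compatible with the signed graph `(G, σ)`: `(G, σ)` is the induced
signed graph of `M`. -/
def Compatible (M : Matrix V V ℝ) (G : SimpleGraph V) (σ : V → V → ℝ) : Prop :=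
  (∀ x y, G.Adj x y ↔ x ≠ y ∧ M x y ≠ 0) ∧
  (∀ x y, G.Adj x y → σ x y = -(M x y / |M x y|))

/-- A signed graph is balanced if every cycle has positive sign. -/
def IsBalanced (G : SimpleGraph V) (σ : V → V → ℝ) : Prop :=
  ∀ (x : V) (p : G.Walk x x), p.IsCycle → chainSign σ p.support = 1

/-- A signed graph is antibalanced if its negation is balanced. -/
def IsAntibalanced (G : SimpleGraph V) (σ : V → V → ℝ) : Prop :=
  IsBalanced G (fun x y => -(σ x y))

/-- ℓ(G) = |E| - |V| + c(G), the cyclomatic number of `G`. -/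
noncomputable def cyclomatic (G : SimpleGraph V) : ℕ :=
  Nat.card G.edgeSet + Nat.card G.ConnectedComponent - Nat.card V

/-- The subgraph of `G` on the edges `{x,y}` with `f x * σ x y * f y > 0`. -/
def posSubgraph (G : SimpleGraph V) (σ : V → V → ℝ) (f : V → ℝ) : SimpleGraph V where
  Adj x y := G.Adj x y ∧ 0 < f x * σ x y * f y ∧ 0 < f y * σ y x * f x
  symm := ⟨fun _ _ h => ⟨h.1.symm, h.2.2, h.2.1⟩⟩
  loopless := ⟨fun x h => G.loopless.irrefl x h.1⟩

/-- `x` is tree-like: removing `x` and its incident edges increases the number of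
connected components by `d_x - 1`. -/
def IsTreeLike (G : SimpleGraph V) (x : V) : Prop :=
  Nat.card (SimpleGraph.induce {y | y ≠ x} G).ConnectedComponent + 1
    = Nat.card G.ConnectedComponent + Nat.card (G.neighborSet x)

/-- The Fiedler zero set of `f` on `G`. -/
def fiedlerZeroSet (G : SimpleGraph V) (f : V → ℝ) : Set V :=
  {x | f x = 0 ∧ ((∀ y, G.Adj x y → f y = 0) ∨ ¬ IsTreeLike G x)}

end NodalDefs

open Finset

namespace Matrix

variable {ι : Type*}

theorem dotProduct_mulVec_mul_le_of_mulVec_eq_smul [Fintype ι] {M : Matrix ι ι ℝ}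
    (hM : M.IsSymm) {f : ι → ℝ} {lam : ℝ} (hf : M *ᵥ f = lam • f) (c : ι → ℝ)
    (hc : ∀ x y, c x ≠ c y → 0 ≤ f x * M x y * f y) :
    (c * f) ⬝ᵥ M *ᵥ (c * f) ≤ lam * ((c * f) ⬝ᵥ (c * f)) := by
  set a : ι → ι → ℝ := fun x y => f x * M x y * f y
  have hrow : ∀ x, ∑ y, a x y = lam * f x ^ 2 := fun x => by
    have := congrFun hf x
    simp only [mulVec, dotProduct, Pi.smul_apply, smul_eq_mul] at this
    simp only [a, mul_assoc, ← mul_sum, this]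
    ring
  have hswap : ∑ x, ∑ y, c y ^ 2 * a x y = ∑ x, ∑ y, c x ^ 2 * a x y := by
    rw [sum_comm]
    refine sum_congr rfl fun x _ => sum_congr rfl fun y _ => ?_
    simp only [a, hM.apply x y]
    ring
  have hquad : (c * f) ⬝ᵥ M *ᵥ (c * f) = ∑ x, ∑ y, c x * c y * a x y := by
    simp only [dotProduct, mulVec, Pi.mul_apply, mul_sum, a]
    refine sum_congr rfl fun x _ => sum_congr rfl fun y _ => by ring
  have hnorm : lam * ((c * f) ⬝ᵥ (c * f)) = ∑ x, ∑ y, c x ^ 2 * a x y := by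
    calc lam * ((c * f) ⬝ᵥ (c * f)) = ∑ x, c x ^ 2 * (lam * f x ^ 2) := by
          simp only [dotProduct, Pi.mul_apply, mul_sum]
          exact sum_congr rfl fun x _ => by ring
      _ = ∑ x, ∑ y, c x ^ 2 * a x y := by simp only [← hrow, mul_sum]
  have hdefect : 0 ≤ ∑ x, ∑ y, (c x - c y) ^ 2 * a x y :=
    sum_nonneg fun x _ => sum_nonneg fun y _ => by
      by_cases hxy : c x = c y
      · simp [hxy]
      · exact mul_nonneg (sq_nonneg _) (hc x y hxy)
  have hexpand : ∑ x, ∑ y, (c x - c y) ^ 2 * a x y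
      = ∑ x, ∑ y, c x ^ 2 * a x y + ∑ x, ∑ y, c y ^ 2 * a x y
        - 2 * ∑ x, ∑ y, c x * c y * a x y := by
    simp only [mul_sum, ← sum_add_distrib, ← sum_sub_distrib]
    refine sum_congr rfl fun x _ => sum_congr rfl fun y _ => by ring
  rw [hquad, hnorm]
  linarith

section Diagonalization

variable [Fintype ι] [DecidableEq ι] {A U : Matrix ι ι ℝ} {d : ι → ℝ}

theorem IsHermitian.eq_eigenvectorUnitary_mul_diagonal_mul_transpose (hA : A.IsHermitian) :
    A = hA.eigenvectorUnitary * diagonal hA.eigenvalues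
      * (hA.eigenvectorUnitary : Matrix ι ι ℝ)ᵀ := by
  conv_lhs => rw [hA.spectral_theorem, Unitary.conjStarAlgAut_apply]
  simp [star_eq_conjTranspose]

theorem IsHermitian.eigenvectorUnitary_mul_transpose_self (hA : A.IsHermitian) :
    hA.eigenvectorUnitary * (hA.eigenvectorUnitary : Matrix ι ι ℝ)ᵀ = 1 := by
  rw [← conjTranspose_eq_transpose_of_trivial, ← star_eq_conjTranspose]
  exact Unitary.mul_star_self_of_mem hA.eigenvectorUnitary.2

theorem dotProduct_self_eq_sum_sq_of_mul_transpose_self (hU : U * Uᵀ = 1) (g : ι → ℝ) :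
    g ⬝ᵥ g = ∑ i, (Uᵀ *ᵥ g) i ^ 2 := by
  calc g ⬝ᵥ g = g ⬝ᵥ (U * Uᵀ) *ᵥ g := by rw [hU, one_mulVec]
    _ = (Uᵀ *ᵥ g) ⬝ᵥ (Uᵀ *ᵥ g) := by
      rw [← mulVec_mulVec, dotProduct_mulVec, mulVec_transpose]
    _ = ∑ i, (Uᵀ *ᵥ g) i ^ 2 := by simp only [dotProduct, sq]

theorem dotProduct_mulVec_eq_sum_of_eq_mul_diagonal (hA : A = U * diagonal d * Uᵀ)
    (g : ι → ℝ) : g ⬝ᵥ A *ᵥ g = ∑ i, d i * (Uᵀ *ᵥ g) i ^ 2 := by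
  rw [hA, ← mulVec_mulVec, ← mulVec_mulVec, dotProduct_mulVec, ← mulVec_transpose]
  simp only [dotProduct, mulVec_diagonal]
  exact sum_congr rfl fun i _ => by ring

theorem lt_dotProduct_mulVec_of_eq_mul_diagonal {lam : ℝ} (hU : U * Uᵀ = 1)
    (hA : A = U * diagonal d * Uᵀ) {g : ι → ℝ} (hg : g ≠ 0)
    (hlow : ∀ i, d i ≤ lam → (Uᵀ *ᵥ g) i = 0) :
    lam * (g ⬝ᵥ g) < g ⬝ᵥ A *ᵥ g := by
  have hcoord : Uᵀ *ᵥ g ≠ 0 := fun h0 => hg <| by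
    rw [← one_mulVec g, ← hU, ← mulVec_mulVec, h0, mulVec_zero]
  obtain ⟨i₀, hi₀⟩ := Function.ne_iff.mp hcoord
  have hgap : ∀ i, (Uᵀ *ᵥ g) i ≠ 0 → lam < d i := fun i hi =>
    lt_of_not_ge fun hle => hi (hlow i hle)
  rw [dotProduct_self_eq_sum_sq_of_mul_transpose_self hU,
    dotProduct_mulVec_eq_sum_of_eq_mul_diagonal hA, mul_sum]
  refine sum_lt_sum (fun i _ => ?_) ⟨i₀, mem_univ _, ?_⟩
  · by_cases hi : (Uᵀ *ᵥ g) i = 0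
    · simp [hi]
    · exact mul_le_mul_of_nonneg_right (hgap i hi).le (sq_nonneg _)
  · exact mul_lt_mul_of_pos_right (hgap i₀ hi₀) (sq_pos_iff.mpr hi₀)

theorem finrank_le_card_le_of_eq_mul_diagonal {lam : ℝ} (hU : U * Uᵀ = 1)
    (hA : A = U * diagonal d * Uᵀ)
    (W : Submodule ℝ (ι → ℝ)) (hW : ∀ g ∈ W, g ⬝ᵥ A *ᵥ g ≤ lam * (g ⬝ᵥ g)) :
    Module.finrank ℝ W ≤ #{i | d i ≤ lam} := by
  set φ : W →ₗ[ℝ] ({i // d i ≤ lam} → ℝ) :=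
    LinearMap.funLeft ℝ ℝ Subtype.val ∘ₗ (Uᵀ).mulVecLin ∘ₗ W.subtype
  have hφ : Function.Injective φ := by
    refine (injective_iff_map_eq_zero φ).mpr fun g hg => ?_
    by_contra hg0
    refine (hW g g.2).not_gt (lt_dotProduct_mulVec_of_eq_mul_diagonal hU hA ?_ fun i hi => ?_)
    · exact fun h => hg0 (Subtype.ext h)
    · exact congrFun hg ⟨i, hi⟩
  simpa [Fintype.card_subtype] using LinearMap.finrank_le_finrank_of_injective hφ

end Diagonalization

theorem IsHermitian.card_filter_eigenvalues_eq [Fintype ι] [DecidableEq ι]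
    {A : Matrix ι ι ℝ} (hA : A.IsHermitian) {μ : ι → ℝ}
    (hchar : A.charpoly = ∏ i, (X - C (μ i))) (p : ℝ → Prop) [DecidablePred p] :
    #{i | p (hA.eigenvalues i)} = #{i | p (μ i)} := by
  have hroots : univ.val.map hA.eigenvalues = univ.val.map μ := by
    have h := hA.roots_charpoly_eq_eigenvalues
    rw [RCLike.ofReal_real_eq_id, Function.id_comp, hchar, roots_prod] at h
    · simpa using h.symm
    · simp [prod_ne_zero_iff, X_sub_C_ne_zero]
  have h := congrArg (Multiset.countP p) hroots
  rwa [Multiset.countP_map, Multiset.countP_map] at h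

end Matrix

theorem Monotone.card_filter_apply_le_le_add {n : ℕ} {μ : Fin n → ℝ} (hμ : Monotone μ)
    (k : Fin n) : #{i | μ i ≤ μ k} ≤ k + #{i | μ i = μ k} := by
  have hlt : #{i | μ i < μ k} ≤ k := by
    simpa using card_le_card fun i (hi : i ∈ ({i | μ i < μ k} : Finset _)) =>
      mem_Iio.mpr (lt_of_not_ge fun hki => (mem_filter.mp hi).2.not_ge (hμ hki))
  have hsplit : univ.filter (fun i => μ i ≤ μ k)
      = univ.filter (fun i => μ i < μ k) ∪ univ.filter (fun i => μ i = μ k) := by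
    rw [← filter_or]
    exact filter_congr fun i _ => le_iff_lt_or_eq
  rw [hsplit]
  exact (card_union_le _ _).trans (Nat.add_le_add_right hlt _)

theorem LinearMap.injective_mulRight_comp_funLeft {ι κ : Type*} (q : ι → κ) (f : ι → ℝ)
    (hq : ∀ k, ∃ x, q x = k ∧ f x ≠ 0) :
    Function.Injective (LinearMap.mulRight ℝ f ∘ₗ LinearMap.funLeft ℝ ℝ q) := by
  refine (injective_iff_map_eq_zero _).mpr fun c hc => funext fun k => ?_
  obtain ⟨x, rfl, hx⟩ := hq k
  simpa [hx] using congrFun hc x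

section StrongDomains

variable {V : Type*} {G : SimpleGraph V} {σ : V → V → ℝ} {f : V → ℝ}

theorem eq_or_sConn_iff_reflTransGen {x y : V} :
    x = y ∨ SConn G σ f x y ↔ Relation.ReflTransGen (SWalkStep G σ f) x y := by
  constructor
  · rintro (rfl | ⟨_ | ⟨a, l⟩, -, hl, hx, hy⟩)
    · exact .refl
    · simp at hx
    · obtain rfl : a = x := by simpa using hx
      exact List.relationReflTransGen_of_exists_isChain_cons l hl
        (by simpa [List.getLast?_eq_some_getLast] using hy)
  · intro h
    rcases Relation.reflTransGen_iff_eq_or_transGen.mp h with rfl | h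
    · exact .inl rfl
    obtain ⟨z, hxz, hzy⟩ := Relation.TransGen.head'_iff.mp h
    obtain ⟨l, hl, hlast⟩ := List.exists_isChain_cons_of_relationReflTransGen hzy
    refine .inr ⟨x :: z :: l, by simp, hl.cons_cons hxz, rfl, ?_⟩
    rw [List.getLast?_cons_cons, List.getLast?_eq_some_getLast (List.cons_ne_nil _ _), hlast]

theorem strongClass_eq_setOf_reflTransGen (w : V) :
    strongClass G σ f w = {x | f x ≠ 0 ∧ Relation.ReflTransGen (SWalkStep G σ f) x w} := by
  simp only [strongClass, eq_or_sConn_iff_reflTransGen]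

theorem SWalkStep.symm (hσ : ∀ x y, σ x y = σ y x) {x y : V} (h : SWalkStep G σ f x y) :
    SWalkStep G σ f y x :=
  ⟨h.1.symm, by rw [hσ]; linarith [h.2]⟩

theorem strongClass_eq_of_sWalkStep (hσ : ∀ x y, σ x y = σ y x) {x y : V}
    (h : SWalkStep G σ f x y) : strongClass G σ f x = strongClass G σ f y := by
  ext z
  simp only [strongClass_eq_setOf_reflTransGen, Set.mem_ofPred_eq]
  exact and_congr_right fun _ => ⟨fun hz => hz.tail h, fun hz => hz.tail (h.symm hσ)⟩

theorem sWalkStep_of_mul_neg {M : Matrix V V ℝ} (hcompat : Compatible M G σ) {x y : V}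
    (hxy : x ≠ y) (h : f x * M x y * f y < 0) : SWalkStep G σ f x y := by
  have hM : M x y ≠ 0 := fun h0 => by simp [h0] at h
  have hadj : G.Adj x y := (hcompat.1 x y).mpr ⟨hxy, hM⟩
  refine ⟨hadj, ?_⟩
  rw [hcompat.2 x y hadj,
    show f x * -(M x y / |M x y|) * f y = -(f x * M x y * f y) / |M x y| by ring]
  exact div_pos (neg_pos.mpr h) (abs_pos.mpr hM)

/-- At a zero of `f` the label is irrelevant (it only multiplies `f x = 0`): `D₀` is a default. -/
noncomputable def strongLabel (D₀ : strongDomains G σ f) (x : V) : strongDomains G σ f :=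
  if hx : f x = 0 then D₀ else ⟨strongClass G σ f x, x, hx, rfl⟩

theorem exists_strongLabel_eq (D₀ D : strongDomains G σ f) :
    ∃ x, strongLabel D₀ x = D ∧ f x ≠ 0 := by
  obtain ⟨D, x, hx, rfl⟩ := D
  exact ⟨x, by simp [strongLabel, hx], hx⟩

theorem strongLabel_eq_of_mul_neg {M : Matrix V V ℝ} (hσ : ∀ x y, σ x y = σ y x)
    (hcompat : Compatible M G σ) (D₀ : strongDomains G σ f) {x y : V}
    (h : f x * M x y * f y < 0) : strongLabel D₀ x = strongLabel D₀ y := by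
  rcases eq_or_ne x y with rfl | hxy
  · rfl
  have hx : f x ≠ 0 := fun h0 => by simp [h0] at h
  have hy : f y ≠ 0 := fun h0 => by simp [h0] at h
  simp only [strongLabel, hx, hy, dite_false]
  exact Subtype.ext <| strongClass_eq_of_sWalkStep hσ (sWalkStep_of_mul_neg hcompat hxy h)

end StrongDomains

theorem numStrong_le_card_le_of_eq_mul_diagonal {V : Type*} [Fintype V] [DecidableEq V]
    {G : SimpleGraph V} {σ : V → V → ℝ} {M U : Matrix V V ℝ} {d : V → ℝ}
    (hM : M.IsSymm) (hσ : ∀ x y, σ x y = σ y x) (hcompat : Compatible M G σ)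
    {f : V → ℝ} {lam : ℝ} (hf : M *ᵥ f = lam • f) (hU : U * Uᵀ = 1)
    (hMU : M = U * diagonal d * Uᵀ) :
    numStrong G σ f ≤ #{i | d i ≤ lam} := by
  rcases isEmpty_or_nonempty (strongDomains G σ f) with hD | hD
  · simp [numStrong]
  obtain ⟨D₀⟩ := hD
  have : Fintype (strongDomains G σ f) := Fintype.ofFinite _
  set L := LinearMap.mulRight ℝ f ∘ₗ LinearMap.funLeft ℝ ℝ (strongLabel D₀)
  have hL : Function.Injective L :=
    LinearMap.injective_mulRight_comp_funLeft _ _ (exists_strongLabel_eq D₀)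
  calc numStrong G σ f = Module.finrank ℝ (LinearMap.range L) := by
        rw [LinearMap.finrank_range_of_inj hL, numStrong, Nat.card_eq_fintype_card,
          Module.finrank_fintype_fun_eq_card]
    _ ≤ #{i | d i ≤ lam} := by
        refine finrank_le_card_le_of_eq_mul_diagonal hU hMU _ ?_
        rintro _ ⟨c, rfl⟩
        refine dotProduct_mulVec_mul_le_of_mulVec_eq_smul hM hf _ fun x y hne => ?_
        exact le_of_not_gt fun hneg =>
          hne (congrArg c (strongLabel_eq_of_mul_neg hσ hcompat D₀ hneg))

-- `k` is 0-based, so `k + r` here is the paper's `k + r - 1`.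
theorem stmt_9_general (n : ℕ) (M : Matrix (Fin n) (Fin n) ℝ) (hM : M.IsSymm)
    (G : SimpleGraph (Fin n)) (σ : Fin n → Fin n → ℝ)
    (hσ : IsSignature G σ) (hcompat : Compatible M G σ)
    (μ : Fin n → ℝ) (hmono : Monotone μ)
    (hchar : M.charpoly = ∏ i, (Polynomial.X - Polynomial.C (μ i)))
    (k : Fin n) (f : Fin n → ℝ) (heig : M.mulVec f = μ k • f) :
    numStrong G σ f ≤ (k : ℕ) + Nat.card {i : Fin n | μ i = μ k} := by
  have hA : M.IsHermitian := isHermitian_iff_isSymm.mpr hM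
  calc numStrong G σ f ≤ #{i | hA.eigenvalues i ≤ μ k} :=
        numStrong_le_card_le_of_eq_mul_diagonal hM hσ.1 hcompat heig
          hA.eigenvectorUnitary_mul_transpose_self
          hA.eq_eigenvectorUnitary_mul_diagonal_mul_transpose
    _ = #{i | μ i ≤ μ k} := hA.card_filter_eigenvalues_eq hchar (· ≤ μ k)
    _ ≤ k + #{i | μ i = μ k} := hmono.card_filter_apply_le_le_add k
    _ = k + Nat.card {i : Fin n | μ i = μ k} := by
        simp [Nat.card_eq_fintype_card, Fintype.card_subtype]

/-- 𝔖(f_k) ≤ k + r - 1 (1-based k; here k is 0-based). -/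
theorem stmt_9 (n : ℕ) (M : Matrix (Fin n) (Fin n) ℝ) (hM : M.IsSymm)
    (G : SimpleGraph (Fin n)) (σ : Fin n → Fin n → ℝ)
    (hσ : IsSignature G σ) (hcompat : Compatible M G σ)
    (μ : Fin n → ℝ) (hmono : Monotone μ)
    (hchar : M.charpoly = ∏ i, (Polynomial.X - Polynomial.C (μ i)))
    (k : Fin n) (f : Fin n → ℝ) (hf : f ≠ 0) (heig : M.mulVec f = μ k • f) :
    numStrong G σ f ≤ (k : ℕ) + Nat.card {i : Fin n | μ i = μ k} :=
  stmt_9_general n M hM G σ hσ hcompat μ hmono hchar k f heig
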